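/- For every t ≥ 0, x ∈ ℝⁿ, every scalar s ∈ ℝ and every vector V ∈ ℝⁿ, one has (1/(−∂_tψ(t,x))) |(∂_tψ(t,x)) V − s ∇ψ(t,x)|² ≥ (1/5)(−∂_tψ(t,x)) |V|² − (a(x)b(t)/(4(2+δ))) s². -/

import Mathlib

noncomputable section

open Real MeasureTheory Filter
open scoped RealInnerProductSpace ENNReal

abbrev E (n : ℕ) : Type := EuclideanSpace ℝ (Fin n)

/-- Japanese bracket `⟨x⟩ = (1+|x|²)^{1/2}`. -/
def jap {n : ℕ} (x : E n) : ℝ := Real.sqrt (1 + ‖x‖ ^ 2)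

/-- Space coefficient `a(x) = a₀ ⟨x⟩^{-α}`. -/
def aco {n : ℕ} (a₀ α : ℝ) (x : E n) : ℝ := a₀ * jap x ^ (-α)

/-- Time coefficient `b(t) = (1+t)^{-β}`. -/
def bco (β t : ℝ) : ℝ := (1 + t) ^ (-β)

/-- The constant `A = (1+β)a₀ / ((2-α)²(2+δ))`. -/
def Aco (a₀ α β δ : ℝ) : ℝ := (1 + β) * a₀ / ((2 - α) ^ 2 * (2 + δ))

/-- The weight `ψ(t,x) = A ⟨x⟩^{2-α}/(1+t)^{1+β}`. -/
def psiW {n : ℕ} (a₀ α β δ : ℝ) (t : ℝ) (x : E n) : ℝ :=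
  Aco a₀ α β δ * jap x ^ (2 - α) / (1 + t) ^ (1 + β)

/-- Laplacian of `f : ℝⁿ → ℝ` as the sum of second partial derivatives. -/
def lap {n : ℕ} (f : E n → ℝ) (x : E n) : ℝ :=
  ∑ i, fderiv ℝ (fun y => fderiv ℝ f y (EuclideanSpace.single i 1)) x (EuclideanSpace.single i 1)

/-- Divergence of a vector field on `ℝⁿ`. -/
def divg {n : ℕ} (V : E n → E n) (x : E n) : ℝ :=
  ∑ i, fderiv ℝ (fun y => V y i) x (EuclideanSpace.single i 1)

/-! Differentiating gives `∂ₜψ = -(1+β)ψ/(1+t)` and `∇ψ = (2-α)ψ⟨x⟩⁻² x`; since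
`|x| ≤ ⟨x⟩` and `(2-α)²(2+δ)A = (1+β)a₀`, this yields `(2+δ)|∇ψ|² ≤ (-∂ₜψ) a b`.
The estimate is then the elementary inequality
`20‖u - w‖² = 4‖u‖² - 5‖w‖² + ‖4u - 5w‖² ≥ 4‖u‖² - 5‖w‖²`
for `u = (∂ₜψ) V`, `w = s ∇ψ`, divided by `-∂ₜψ`. -/

lemma norm_sq_div_five_sub_le_norm_sub_sq {F : Type*} [NormedAddCommGroup F]
    [InnerProductSpace ℝ F] (u w : F) :
    ‖u‖ ^ 2 / 5 - ‖w‖ ^ 2 / 4 ≤ ‖u - w‖ ^ 2 := by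
  have h := norm_sub_sq_real ((4 : ℝ) • u) ((5 : ℝ) • w)
  simp only [norm_smul, real_inner_smul_left, real_inner_smul_right, Real.norm_ofNat] at h
  nlinarith [norm_sub_sq_real u w, sq_nonneg ‖(4 : ℝ) • u - (5 : ℝ) • w‖]

lemma quadratic_lower_bound {F : Type*} [NormedAddCommGroup F] [InnerProductSpace ℝ F]
    {d κ c : ℝ} (hd : d < 0) (hκ : 0 < κ) {G : F} (hG : κ * ‖G‖ ^ 2 ≤ -d * c) (s : ℝ) (V : F) :
    1 / (-d) * ‖d • V - s • G‖ ^ 2 ≥ 1 / 5 * (-d) * ‖V‖ ^ 2 - c / (4 * κ) * s ^ 2 := by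
  have hd' : 0 < -d := neg_pos.mpr hd
  have key := norm_sq_div_five_sub_le_norm_sub_sq (d • V) (s • G)
  rw [norm_smul, norm_smul, Real.norm_eq_abs, Real.norm_eq_abs, mul_pow, mul_pow, sq_abs,
    sq_abs] at key
  have hGc : ‖G‖ ^ 2 / (-d) ≤ c / κ := by
    rw [div_le_div_iff₀ hd' hκ]; linarith
  calc 1 / 5 * (-d) * ‖V‖ ^ 2 - c / (4 * κ) * s ^ 2
      = 1 / 5 * (-d) * ‖V‖ ^ 2 - s ^ 2 * (c / κ) / 4 := by ring
    _ ≤ 1 / 5 * (-d) * ‖V‖ ^ 2 - s ^ 2 * (‖G‖ ^ 2 / (-d)) / 4 := by gcongr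
    _ = 1 / (-d) * (d ^ 2 * ‖V‖ ^ 2 / 5 - s ^ 2 * ‖G‖ ^ 2 / 4) := by
        field_simp; ring
    _ ≤ 1 / (-d) * ‖d • V - s • G‖ ^ 2 := by gcongr

lemma jap_pos {n : ℕ} (x : E n) : 0 < jap x := Real.sqrt_pos.mpr (by positivity)

lemma jap_sq {n : ℕ} (x : E n) : jap x ^ 2 = 1 + ‖x‖ ^ 2 := Real.sq_sqrt (by positivity)

lemma hasFDerivAt_jap_rpow {n : ℕ} (p : ℝ) (x : E n) :
    HasFDerivAt (fun y : E n => jap y ^ p)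
      ((p * jap x ^ p / jap x ^ 2) • innerSL ℝ x) x := by
  have hjap : HasFDerivAt (fun y : E n => jap y) ((1 / (2 * jap x)) • 2 • innerSL ℝ x) x := by
    simpa [jap] using (((hasFDerivAt_id x).norm_sq).const_add 1).sqrt (by positivity)
  refine (hjap.rpow_const (p := p) (Or.inl (jap_pos x).ne')).congr_fderiv ?_
  ext v
  simp only [smul_apply, innerSL_apply_apply, smul_eq_mul, nsmul_eq_mul, Nat.cast_ofNat]
  rw [Real.rpow_sub_one (jap_pos x).ne']
  field_simp

lemma hasGradientAt_psiW {n : ℕ} (a₀ α β δ t : ℝ) (x : E n) :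
    HasGradientAt (psiW a₀ α β δ t) (((2 - α) * psiW a₀ α β δ t x / jap x ^ 2) • x) x := by
  have hψ : psiW a₀ α β δ t = fun y : E n =>
      Aco a₀ α β δ * jap y ^ (2 - α) * ((1 + t) ^ (1 + β))⁻¹ := by
    funext y
    exact div_eq_mul_inv _ _
  rw [hasGradientAt_iff_hasFDerivAt, hψ]
  refine (((hasFDerivAt_jap_rpow (2 - α) x).const_mul (Aco a₀ α β δ)).mul_const
    ((1 + t) ^ (1 + β))⁻¹).congr_fderiv ?_
  ext v
  simp only [smul_apply, coe_innerSL_apply, smul_eq_mul, map_smul,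
    InnerProductSpace.toDual_apply_apply]
  ring

lemma hasDerivAt_psiW {n : ℕ} (a₀ α β δ : ℝ) {t : ℝ} (ht : -1 < t) (x : E n) :
    HasDerivAt (fun τ => psiW a₀ α β δ τ x) (-((1 + β) * psiW a₀ α β δ t x / (1 + t))) t := by
  have hT : 0 < 1 + t := by linarith
  have hpow : HasDerivAt (fun τ : ℝ => (1 + τ) ^ (1 + β)) ((1 + β) * (1 + t) ^ β) t := by
    simpa using ((hasDerivAt_id t).const_add 1).rpow_const (p := 1 + β) (Or.inl hT.ne')
  refine ((hasDerivAt_const t (Aco a₀ α β δ * jap x ^ (2 - α))).div hpow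
    (Real.rpow_pos_of_pos hT _).ne').congr_deriv ?_
  rw [psiW, add_comm 1 β, Real.rpow_add_one hT.ne']
  field_simp
  ring

lemma Aco_pos {a₀ α β δ : ℝ} (ha₀ : 0 < a₀) (hα : α ≠ 2) (hβ : -1 < β) (hδ : 0 < 2 + δ) :
    0 < Aco a₀ α β δ := by
  have : 0 < (2 - α) ^ 2 := sq_pos_of_ne_zero (sub_ne_zero.mpr (Ne.symm hα))
  unfold Aco
  have : 0 < 1 + β := by linarith
  positivity

lemma two_sub_sq_mul_psiW_mul {n : ℕ} {a₀ α β δ t : ℝ} (hα : α ≠ 2) (hδ : 2 + δ ≠ 0)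
    (ht : -1 < t) (x : E n) :
    (2 - α) ^ 2 * (2 + δ) * psiW a₀ α β δ t x * (1 + t)
      = (1 + β) * (aco a₀ α x * bco β t) * jap x ^ 2 := by
  have hT : 0 < 1 + t := by linarith
  have hα' : 2 - α ≠ 0 := sub_ne_zero.mpr (Ne.symm hα)
  have hjap : jap x ^ (2 - α) = jap x ^ (-α) * jap x ^ 2 := by
    rw [sub_eq_neg_add, Real.rpow_add (jap_pos x), Real.rpow_two]
  have hpow : (1 + t) ^ (1 + β) = (1 + t) ^ β * (1 + t) := by
    rw [add_comm 1 β, Real.rpow_add_one hT.ne']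
  rw [psiW, Aco, aco, bco, hjap, hpow, Real.rpow_neg hT.le]
  have := Real.rpow_pos_of_pos hT β
  field_simp

lemma deriv_psiW_neg {n : ℕ} {a₀ α β δ t : ℝ} (ha₀ : 0 < a₀) (hα : α ≠ 2) (hβ : -1 < β)
    (hδ : 0 < 2 + δ) (ht : -1 < t) (x : E n) :
    deriv (fun τ => psiW a₀ α β δ τ x) t < 0 := by
  have hT : 0 < 1 + t := by linarith
  have hψ : 0 < psiW a₀ α β δ t x := div_pos
    (mul_pos (Aco_pos ha₀ hα hβ hδ) (Real.rpow_pos_of_pos (jap_pos x) _))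
    (Real.rpow_pos_of_pos hT _)
  rw [(hasDerivAt_psiW a₀ α β δ ht x).deriv, neg_lt_zero]
  have : 0 < 1 + β := by linarith
  positivity

lemma two_add_mul_norm_gradient_psiW_sq_le {n : ℕ} {a₀ α β δ t : ℝ} (hα : α ≠ 2)
    (hδ : 0 < 2 + δ) (ht : -1 < t) (x : E n) :
    (2 + δ) * ‖gradient (psiW a₀ α β δ t) x‖ ^ 2
      ≤ -deriv (fun τ => psiW a₀ α β δ τ x) t * (aco a₀ α x * bco β t) := by
  have hT : 0 < 1 + t := by linarith
  have hj := (jap_pos x).ne'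
  have hx : ‖x‖ ^ 2 ≤ jap x ^ 2 := by rw [jap_sq]; linarith
  rw [(hasGradientAt_psiW a₀ α β δ t x).gradient, (hasDerivAt_psiW a₀ α β δ ht x).deriv, neg_neg,
    norm_smul, mul_pow, Real.norm_eq_abs, sq_abs]
  set ψ := psiW a₀ α β δ t x
  calc (2 + δ) * (((2 - α) * ψ / jap x ^ 2) ^ 2 * ‖x‖ ^ 2)
      ≤ (2 + δ) * (((2 - α) * ψ / jap x ^ 2) ^ 2 * jap x ^ 2) := by gcongr
    _ = ψ * ((2 - α) ^ 2 * (2 + δ) * ψ * (1 + t)) / ((1 + t) * jap x ^ 2) := by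
        field_simp
    _ = (1 + β) * ψ / (1 + t) * (aco a₀ α x * bco β t) := by
        rw [two_sub_sq_mul_psiW_mul hα hδ.ne' ht x]
        field_simp

theorem quadratic_estimate_general {n : ℕ} (a₀ α β δ : ℝ) (ha₀ : 0 < a₀)
    (hβ : 0 ≤ β) (hαβ : α + β < 1) (hδ : 0 < δ)
    (t : ℝ) (ht : 0 ≤ t) (x : E n) (s : ℝ) (V : E n) :
    (1 / (-(deriv (fun τ => psiW a₀ α β δ τ x) t))) *
        ‖(deriv (fun τ => psiW a₀ α β δ τ x) t) • V - s • gradient (psiW a₀ α β δ t) x‖ ^ 2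
      ≥ (1 / 5) * (-(deriv (fun τ => psiW a₀ α β δ τ x) t)) * ‖V‖ ^ 2
        - (aco a₀ α x * bco β t / (4 * (2 + δ))) * s ^ 2 := by
  have hα : α ≠ 2 := (show α < 2 by linarith).ne
  have hδ' : 0 < 2 + δ := by linarith
  have ht' : -1 < t := by linarith
  exact quadratic_lower_bound (deriv_psiW_neg ha₀ hα (by linarith) hδ' ht' x) hδ'
    (two_add_mul_norm_gradient_psiW_sq_le hα hδ' ht' x) s V

/-- the key pointwise quadratic-form estimate used to treat the term `T₁`. -/
theorem quadratic_estimate {n : ℕ} (hn : 1 ≤ n) (a₀ α β δ : ℝ) (ha₀ : 0 < a₀)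
    (hα : 0 ≤ α) (hβ : 0 ≤ β) (hαβ : α + β < 1) (hδ : 0 < δ)
    (t : ℝ) (ht : 0 ≤ t) (x : E n) (s : ℝ) (V : E n) :
    (1 / (-(deriv (fun τ => psiW a₀ α β δ τ x) t))) *
        ‖(deriv (fun τ => psiW a₀ α β δ τ x) t) • V - s • gradient (psiW a₀ α β δ t) x‖ ^ 2
      ≥ (1 / 5) * (-(deriv (fun τ => psiW a₀ α β δ τ x) t)) * ‖V‖ ^ 2
        - (aco a₀ α x * bco β t / (4 * (2 + δ))) * s ^ 2 :=
  quadratic_estimate_general a₀ α β δ ha₀ hβ hαβ hδ t ht x s V
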